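/- Let ζ ∈ ℂ be a primitive 5th root of unity and define ξ : {1,…,11} → ℂˣ by ξ(1)=ζ, ξ(2)=ζ⁴, ξ(3)=ζ³, ξ(4)=ζ², ξ(5)=1, ξ(6)=1, ξ(7)=ζ, ξ(8)=ζ², ξ(9)=ζ³, ξ(10)=ζ⁴, ξ(11)=1. Then: (i) ∏_{i=1}^{11} ξ(i) = 1; (ii) ξ(5) = ξ(6) = ξ(11) = 1; (iii) the sets {5,6}, {6,11}, {5,11} all belong to P; and (iv) for every S ∈ P with S ∩ {5,6,11} ≠ ∅, ∏_{i∈S} ξ(i) = 1. (These are exactly the conditions making (A, ξ, γ_{(5,6,11)}) an inner-cyclic arrangement for any realization A of K, where γ_{(5,6,11)} is the cycle of the incidence graph through the lines 5, 6, 11 and the double points {5,6}, {6,11}, {5,11}.) -/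
import Mathlib


open Finset

/-- The point set `P` of the combinatorics `K` on the line set `{1,…,11}`. -/
def Kpoints : Finset (Finset ℕ) :=
  { {1,2}, {1,3,5,7}, {1,4,6,8}, {1,9}, {1,10,11}, {2,3,6,9}, {2,4,5,10},
    {2,7,11}, {2,8}, {3,4}, {3,8,11}, {3,10}, {4,7}, {4,9,11}, {5,6},
    {5,8,9}, {5,11}, {6,7,10}, {6,11}, {7,8}, {7,9}, {8,10}, {9,10} }

/-- The character `ξ : (L₁,…,L₁₁) ↦ (ζ, ζ⁴, ζ³, ζ², 1, 1, ζ, ζ², ζ³, ζ⁴, 1)`. -/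
noncomputable def xi (ζ : ℂ) : ℕ → ℂ
  | 1 => ζ
  | 2 => ζ ^ 4
  | 3 => ζ ^ 3
  | 4 => ζ ^ 2
  | 5 => 1
  | 6 => 1
  | 7 => ζ
  | 8 => ζ ^ 2
  | 9 => ζ ^ 3
  | 10 => ζ ^ 4
  | 11 => 1
  | _ => 1

set_option maxHeartbeats 1000000 in
/-- For `ζ` a primitive 5th root of unity, the character `ξ` satisfies: (i) the product of all
its values is 1; (ii) `ξ(5) = ξ(6) = ξ(11) = 1`; (iii) `{5,6}`, `{6,11}`, `{5,11}` belong to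
`P`; and (iv) for every `S ∈ P` meeting `{5,6,11}`, `∏_{i ∈ S} ξ(i) = 1`. These are exactly
the conditions making `(A, ξ, γ₍₅,₆,₁₁₎)` inner-cyclic for any realization `A` of `K`. -/
theorem stmt13 (ζ : ℂ) (hζ : IsPrimitiveRoot ζ 5) :
    (∏ i ∈ Finset.Icc 1 11, xi ζ i = 1) ∧
    (xi ζ 5 = 1 ∧ xi ζ 6 = 1 ∧ xi ζ 11 = 1) ∧
    (({5, 6} : Finset ℕ) ∈ Kpoints ∧ ({6, 11} : Finset ℕ) ∈ Kpoints ∧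
      ({5, 11} : Finset ℕ) ∈ Kpoints) ∧
    (∀ S ∈ Kpoints, (S ∩ ({5, 6, 11} : Finset ℕ)).Nonempty → ∏ i ∈ S, xi ζ i = 1) := by
  have h5 : ζ ^ 5 = 1 := hζ.pow_eq_one
  have h10 : ζ ^ 10 = 1 := by rw [show (10:ℕ) = 5*2 from rfl, pow_mul, h5, one_pow]
  have h20 : ζ ^ 20 = 1 := by rw [show (20:ℕ) = 5*4 from rfl, pow_mul, h5, one_pow]
  refine ⟨?_, ⟨rfl, rfl, rfl⟩, ⟨by decide, by decide, by decide⟩, ?_⟩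
  · rw [show Finset.Icc 1 11 = ({1,2,3,4,5,6,7,8,9,10,11} : Finset ℕ) from rfl]
    norm_num [Finset.prod_insert, Finset.mem_insert, xi]
    ring_nf
    first | exact h20 | simp [h5, h10, h20]
  · intro S hS hne
    simp only [Kpoints, Finset.mem_insert, Finset.mem_singleton] at hS
    rcases hS with rfl|rfl|rfl|rfl|rfl|rfl|rfl|rfl|rfl|rfl|rfl|rfl|rfl|rfl|rfl|rfl|rfl|rfl|rfl|rfl|rfl|rfl|rfl <;>
      first
      | exact absurd hne (by decide)
      | (clear * - h5 h10
         norm_num [Finset.prod_insert, Finset.mem_insert, xi]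
         all_goals try ring_nf
         all_goals first | exact h5 | exact h10 | simp [h5, h10])
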